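/- Let A be a unital ring with complete orthogonal idempotents e_0,…,e_n, and f_i = e_0 + e_i for 1 ≤ i ≤ n. For any left A-module F, the map φ_F : F → ⊕_{i=1}^n Hom_{f_i A f_i}(A, f_i A ⊗_A F), defined by f ↦ (a ↦ f_i a ⊗ f)_{1 ≤ i ≤ n}, is injective. -/

import Mathlib

open DirectSum


universe u

section Common

variable {A : Type u} [Ring A]

/-- The left ideal `Ae = {x | x * e = x}`. -/
def lIdeal (e : A) : Submodule A A where
  carrier := {x | x * e = x}
  add_mem' := by intro a b ha hb; simp only [Set.mem_setOf_eq] at *; rw [add_mul, ha, hb]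
  zero_mem' := by simp
  smul_mem' := by intro c x hx; simp only [Set.mem_setOf_eq, smul_eq_mul] at *; rw [mul_assoc, hx]

/-- The right ideal `eA = {x | e * x = x}`, as an additive subgroup. -/
def rIdeal (e : A) : AddSubgroup A where
  carrier := {x | e * x = x}
  add_mem' := by intro a b ha hb; simp only [Set.mem_setOf_eq] at *; rw [mul_add, ha, hb]
  zero_mem' := by simp
  neg_mem' := by intro a ha; simp only [Set.mem_setOf_eq] at *; rw [mul_neg, ha]

/-- The additive subgroup `eAe = {x | e * x = x ∧ x * e = x}`. -/
def cornerAdd (e : A) : AddSubgroup A where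
  carrier := {x | e * x = x ∧ x * e = x}
  add_mem' := by
    rintro a b ⟨ha1, ha2⟩ ⟨hb1, hb2⟩
    exact ⟨by rw [mul_add, ha1, hb1], by rw [add_mul, ha2, hb2]⟩
  zero_mem' := ⟨by simp, by simp⟩
  neg_mem' := by rintro a ⟨h1, h2⟩; exact ⟨by rw [mul_neg, h1], by rw [neg_mul, h2]⟩

/-- The corner ring `eAe` of an idempotent `e`. -/
def Corner (e : A) (_he : IsIdempotentElem e) : Type u := ↥(cornerAdd e)

namespace Corner

variable {e : A} {he : IsIdempotentElem e}

instance : AddCommGroup (Corner e he) := inferInstanceAs (AddCommGroup ↥(cornerAdd e))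

instance instRing : Ring (Corner e he) where
  __ := (inferInstanceAs (AddCommGroup (Corner e he)) : AddCommGroup (Corner e he))
  mul x y := ⟨x.1 * y.1, by rw [← mul_assoc, x.2.1], by rw [mul_assoc, y.2.2]⟩
  one := ⟨e, he, he⟩
  mul_assoc x y z := Subtype.ext (mul_assoc _ _ _)
  one_mul x := Subtype.ext x.2.1
  mul_one x := Subtype.ext x.2.2
  left_distrib x y z := Subtype.ext (mul_add _ _ _)
  right_distrib x y z := Subtype.ext (add_mul _ _ _)
  zero_mul x := Subtype.ext (zero_mul _)
  mul_zero x := Subtype.ext (mul_zero _)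

@[simp] lemma val_mul (x y : Corner e he) : (x * y).1 = x.1 * y.1 := rfl
@[simp] lemma val_one : (1 : Corner e he).1 = e := rfl
@[simp] lemma val_add (x y : Corner e he) : (x + y).1 = x.1 + y.1 := rfl

end Corner

end Common
section Common2

variable {A : Type u} [Ring A] {e : A} {he : IsIdempotentElem e}

/-- `eF = {x ∈ F | e • x = x}`, realising `eA ⊗_A F`. -/
def eSub (e : A) (F : Type u) [AddCommGroup F] [Module A F] : AddSubgroup F where
  carrier := {x | e • x = x}
  add_mem' := by intro a b ha hb; simp only [Set.mem_setOf_eq] at *; rw [smul_add, ha, hb]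
  zero_mem' := by simp
  neg_mem' := by intro a ha; simp only [Set.mem_setOf_eq] at *; rw [smul_neg, ha]

variable {F : Type u} [AddCommGroup F] [Module A F]

instance : SMul (Corner e he) ↥(eSub e F) :=
  ⟨fun c x => ⟨c.1 • x.1, by
    show e • (c.1 • x.1) = c.1 • x.1
    rw [← mul_smul, c.2.1]⟩⟩

@[simp] lemma eSub_smul_val (c : Corner e he) (x : ↥(eSub e F)) :
    (c • x : ↥(eSub e F)).1 = c.1 • x.1 := rfl

instance : Module (Corner e he) ↥(eSub e F) where
  smul := (· • ·)
  one_smul x := Subtype.ext (by show e • x.1 = x.1; exact x.2)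
  mul_smul c d x := Subtype.ext (by show (c.1 * d.1) • x.1 = c.1 • d.1 • x.1; rw [mul_smul])
  smul_zero c := Subtype.ext (by show c.1 • (0 : F) = 0; simp)
  smul_add c x y := Subtype.ext (by show c.1 • (x.1 + y.1) = c.1 • x.1 + c.1 • y.1; rw [smul_add])
  add_smul c d x := Subtype.ext (by show (c.1 + d.1) • x.1 = c.1 • x.1 + d.1 • x.1; rw [add_smul])
  zero_smul x := Subtype.ext (by show (0 : A) • x.1 = 0; simp)

/-- `eA` as a left module over the corner ring. -/
instance : SMul (Corner e he) ↥(rIdeal e) :=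
  ⟨fun c q => ⟨c.1 * q.1, by show e * (c.1 * q.1) = c.1 * q.1; rw [← mul_assoc, c.2.1]⟩⟩

@[simp] lemma rIdeal_smul_val (c : Corner e he) (q : ↥(rIdeal e)) :
    (c • q : ↥(rIdeal e)).1 = c.1 * q.1 := rfl

instance : Module (Corner e he) ↥(rIdeal e) where
  smul := (· • ·)
  one_smul q := Subtype.ext (by show e * q.1 = q.1; exact q.2)
  mul_smul c d q := Subtype.ext (by show (c.1 * d.1) * q.1 = c.1 * (d.1 * q.1); rw [mul_assoc])
  smul_zero c := Subtype.ext (by show c.1 * (0 : A) = 0; simp)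
  smul_add c q q' := Subtype.ext (by show c.1 * (q.1 + q'.1) = c.1 * q.1 + c.1 * q'.1; rw [mul_add])
  add_smul c d q := Subtype.ext (by show (c.1 + d.1) * q.1 = c.1 * q.1 + d.1 * q.1; rw [add_mul])
  zero_smul q := Subtype.ext (by show (0 : A) * q.1 = 0; simp)

/-- `Hom_{eAe}(A, M)`, where `A` carries the (non-unital) left `eAe`-action by
left multiplication: additive maps `φ : A → M` with `φ((exe)·a) = (exe)•φ(a)`. -/
def homSub (e : A) (he : IsIdempotentElem e) (M : Type u) [AddCommGroup M]
    [Module (Corner e he) M] : AddSubgroup (A →+ M) where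
  carrier := {φ | ∀ (c : Corner e he) (a : A), φ (c.1 * a) = c • φ a}
  add_mem' := by intro φ ψ hφ hψ c a; simp [hφ c a, hψ c a, smul_add]
  zero_mem' := by intro c a; simp
  neg_mem' := by intro φ hφ c a; simp [hφ c a]

/-- For `p ∈ Ae` and `a ∈ A`, the element `e a p e = e (a p) e` of the corner ring. -/
def cornerMul (e : A) (he : IsIdempotentElem e) (p : ↥(lIdeal e)) (a : A) : Corner e he :=
  ⟨e * (a * p.1),
   by simp only [← mul_assoc]; rw [he],
   by have hp : p.1 * e = p.1 := p.2
      simp only [mul_assoc]; rw [hp]⟩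

/-- `e` as an element of `Ae`. -/
def lUnit (e : A) (he : IsIdempotentElem e) : ↥(lIdeal e) := ⟨e, he⟩

/-- A tensor product `Ae ⊗_{eAe} N` of the right `eAe`-module `Ae` with a left
`eAe`-module `N`: an abelian group `T` with a balanced biadditive pairing which is
universal among such. -/
structure CornerTensor (e : A) (he : IsIdempotentElem e) (N : Type u) [AddCommGroup N]
    [Module (Corner e he) N] (T : Type u) [AddCommGroup T] : Type (u + 1) where
  pair : ↥(lIdeal e) →+ N →+ T
  balanced : ∀ (p : ↥(lIdeal e)) (c : Corner e he) (m : N),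
    pair ⟨p.1 * c.1, by show (p.1 * c.1) * e = p.1 * c.1; rw [mul_assoc, c.2.2]⟩ m
      = pair p (c • m)
  span : AddSubgroup.closure (Set.range fun z : ↥(lIdeal e) × N => pair z.1 z.2) = ⊤
  lift : ∀ {P : Type u} [AddCommGroup P] (g : ↥(lIdeal e) →+ N →+ P),
    (∀ (p : ↥(lIdeal e)) (c : Corner e he) (m : N),
      g ⟨p.1 * c.1, by show (p.1 * c.1) * e = p.1 * c.1; rw [mul_assoc, c.2.2]⟩ m
        = g p (c • m)) → (T →+ P)
  lift_pair : ∀ {P : Type u} [AddCommGroup P] (g : ↥(lIdeal e) →+ N →+ P) (hg) (p : ↥(lIdeal e))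
    (m : N), lift g hg (pair p m) = g p m

end Common2
section Fam

variable {A : Type u} [Ring A] {n : ℕ}

/-- For a complete set of orthogonal idempotents `e₀,…,e_n`, the element
`f_i = e₀ + e_i` is again idempotent. -/
lemma fIdem (e : Fin (n + 1) → A) (hidem : ∀ i, IsIdempotentElem (e i))
    (horth : ∀ i j, i ≠ j → e i * e j = 0) (i : Fin n) :
    IsIdempotentElem (e 0 + e i.succ) := by
  have h1 := hidem 0
  have h2 := hidem i.succ
  have h3 := horth 0 i.succ (Fin.succ_ne_zero i).symm
  have h4 := horth i.succ 0 (Fin.succ_ne_zero i)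
  unfold IsIdempotentElem at *
  rw [add_mul, mul_add, mul_add, h1, h2, h3, h4, add_zero, zero_add]

end Fam

section Idempotents

variable {R : Type*} [Semiring R]

theorem eq_of_forall_smul_eq_of_sum_eq_one {ι M : Type*} [Fintype ι] [AddCommMonoid M]
    [Module R M] (e : ι → R) (hsum : ∑ i, e i = 1) {x y : M} (h : ∀ i, e i • x = e i • y) :
    x = y := by
  rw [← one_smul R x, ← one_smul R y, ← hsum, Finset.sum_smul, Finset.sum_smul]
  exact Finset.sum_congr rfl fun i _ => h i

theorem IsIdempotentElem.add_mul_self_of_mul_eq_zero {e f : R} (he : IsIdempotentElem e)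
    (hfe : f * e = 0) : (e + f) * e = e := by
  rw [add_mul, he.eq, hfe, add_zero]

theorem IsIdempotentElem.add_mul_self_of_mul_eq_zero' {e f : R} (he : IsIdempotentElem e)
    (hfe : f * e = 0) : (f + e) * e = e := by
  rw [add_mul, he.eq, hfe, zero_add]

variable {n : ℕ}

theorem exists_add_succ_mul_eq_self (hn : 0 < n) (e : Fin (n + 1) → R)
    (hidem : ∀ i, IsIdempotentElem (e i)) (horth : ∀ i j, i ≠ j → e i * e j = 0)
    (j : Fin (n + 1)) : ∃ i : Fin n, (e 0 + e i.succ) * e j = e j := by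
  induction j using Fin.cases with
  | zero =>
    let i : Fin n := ⟨0, hn⟩
    exact ⟨i, (hidem 0).add_mul_self_of_mul_eq_zero (horth _ _ i.succ_ne_zero)⟩
  | succ k =>
    exact ⟨k, (hidem k.succ).add_mul_self_of_mul_eq_zero' (horth _ _ k.succ_ne_zero.symm)⟩

end Idempotents

/-- Let `A` be a unital ring with complete orthogonal idempotents
`e₀,…,e_n` and `f_i = e₀ + e_i`. For any left `A`-module `F`, the map
`φ_F : F → ⊕_{i=1}^n Hom_{f_i A f_i}(A, f_i A ⊗_A F)`, defined by
`f ↦ (a ↦ f_i a ⊗ f)_i`, is injective. Here `f_i A ⊗_A F` is realised canonically as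
`f_i F`, and `f_i a ⊗ f` corresponds to `f_i • (a • f)`. -/
theorem stmt_7 {A F : Type u} [Ring A] [AddCommGroup F] [Module A F]
    {n : ℕ} (hn : 0 < n)
    (e : Fin (n + 1) → A) (hidem : ∀ i, IsIdempotentElem (e i))
    (horth : ∀ i j, i ≠ j → e i * e j = 0) (hsum : ∑ i, e i = 1)
    (φ : F → ∀ i : Fin n, ↥(homSub (e 0 + e i.succ) (fIdem e hidem horth i)
      ↥(eSub (e 0 + e i.succ) F)))
    (hφ : ∀ (x : F) (i : Fin n) (a : A),
      ((((φ x i).1 : A →+ ↥(eSub (e 0 + e i.succ) F)) a : ↥(eSub (e 0 + e i.succ) F)) : F)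
        = (e 0 + e i.succ) • (a • x)) :
    Function.Injective φ := by
  intro x y hxy
  have hcomponents :
      ∀ (i : Fin n) (a : A), (e 0 + e i.succ) • (a • x) = (e 0 + e i.succ) • (a • y) :=
    fun i a => by rw [← hφ, ← hφ, hxy]
  refine eq_of_forall_smul_eq_of_sum_eq_one e hsum fun j => ?_
  obtain ⟨i, hi⟩ := exists_add_succ_mul_eq_self hn e hidem horth j
  rw [← hi, mul_smul, mul_smul, hcomponents]
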